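/- Let n ≥ 1, γ ∈ ℝ, and let I ⊆ ℝ be an open interval. Let ρ, Φ : I × ℝⁿ → ℝ be smooth with ρ(t,x) > 0 for all (t,x), satisfying the continuity equation ∂_t ρ + ∇·(ρ^γ ∇Φ) = 0 and the Hamilton–Jacobi equation ∂_t Φ + (γ/2)·ρ^{γ−1}·‖∇Φ‖² = 0 on I × ℝⁿ (all spatial operators taken in x). Define the velocity field v(t,x) = ρ(t,x)^{γ−1}·∇Φ(t,x). Then for every (t,x) ∈ I × ℝⁿ: ∂_t v + (Dv)·v = −((γ−1)/2)·∇‖v‖² − (γ−1)·(∇·v)·v + ((γ−2)(γ−1)/2)·‖v‖²·∇log ρ, where (Dv)·v denotes the vector with components Σ_j v_j ∂_j v_i (the derivative of v in the direction v). -/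

import Mathlib

open MeasureTheory Filter Set
open scoped InnerProductSpace Topology

/-- Partial derivative `∂ⱼ f x` on Euclidean space. -/
noncomputable def pder (n : ℕ) (j : Fin n) (f : EuclideanSpace ℝ (Fin n) → ℝ)
    (x : EuclideanSpace ℝ (Fin n)) : ℝ :=
  fderiv ℝ f x (EuclideanSpace.single j 1)

/-- Divergence `∇·v` of a vector field on Euclidean space. -/
noncomputable def divg (n : ℕ) (v : EuclideanSpace ℝ (Fin n) → EuclideanSpace ℝ (Fin n))
    (x : EuclideanSpace ℝ (Fin n)) : ℝ :=
  ∑ j, pder n j (fun y => v y j) x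

/-- Laplacian `Δf = ∑ⱼ ∂ⱼ∂ⱼ f`. -/
noncomputable def lapl (n : ℕ) (f : EuclideanSpace ℝ (Fin n) → ℝ)
    (x : EuclideanSpace ℝ (Fin n)) : ℝ :=
  ∑ j, pder n j (fun y => pder n j f y) x

/-- Entry `(i,j)` of the Hessian matrix of `f`. -/
noncomputable def hessij (n : ℕ) (f : EuclideanSpace ℝ (Fin n) → ℝ)
    (x : EuclideanSpace ℝ (Fin n)) (i j : Fin n) : ℝ :=
  pder n i (fun y => pder n j f y) x

/-- Hessian quadratic form `Hess f (u,u) = ∑ᵢⱼ (∂ᵢ∂ⱼf) uᵢ uⱼ`. -/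
noncomputable def hessQF (n : ℕ) (f : EuclideanSpace ℝ (Fin n) → ℝ)
    (x u : EuclideanSpace ℝ (Fin n)) : ℝ :=
  ∑ i, ∑ j, hessij n f x i j * u i * u j

/-- Squared Frobenius norm of the Hessian: `‖Hess f‖² = ∑ᵢⱼ (∂ᵢ∂ⱼf)²`. -/
noncomputable def hessFrob (n : ℕ) (f : EuclideanSpace ℝ (Fin n) → ℝ)
    (x : EuclideanSpace ℝ (Fin n)) : ℝ :=
  ∑ i, ∑ j, (hessij n f x i j)^2

/-- Build a Euclidean vector from its coordinates. -/
noncomputable def toE (n : ℕ) (f : Fin n → ℝ) : EuclideanSpace ℝ (Fin n) :=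
  (WithLp.equiv 2 (Fin n → ℝ)).symm f

/-!
Write `v = ρ^(γ-1) ∇Φ`. By the product rule and the symmetry of mixed partial derivatives,
`∂ₜv = (γ-1) ρ^(γ-2) (∂ₜρ) ∇Φ + ρ^(γ-1) ∇(∂ₜΦ)`. The continuity and Hamilton–Jacobi equations
turn `∂ₜρ` and `∂ₜΦ` into spatial expressions, after which both sides of the identity are
polynomials in `ρ^(γ-2)`, `ρ`, `∇ρ`, `∇Φ`, `ΔΦ` and `(D²Φ) ∇Φ` (the latter appearing in both
`(Dv) v` and `∇‖v‖²` thanks to the symmetry of the Hessian), and they agree term by term.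
-/

section PartialDerivatives

variable {E : Type*} [NormedAddCommGroup E] [NormedSpace ℝ E] {F : ℝ → E → ℝ} {t : ℝ} {x : E}

theorem hasDerivAt_apply_left_of_hasFDerivAt {L : ℝ × E →L[ℝ] ℝ}
    (h : HasFDerivAt (fun p : ℝ × E => F p.1 p.2) L (t, x)) :
    HasDerivAt (fun s => F s x) (L (1, 0)) t := by
  simpa [Function.comp_def] using (h.comp t (hasFDerivAt_prodMk_left t x)).hasDerivAt

theorem hasFDerivAt_apply_right_of_hasFDerivAt {L : ℝ × E →L[ℝ] ℝ}
    (h : HasFDerivAt (fun p : ℝ × E => F p.1 p.2) L (t, x)) :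
    HasFDerivAt (F t) (L.comp (ContinuousLinearMap.inr ℝ ℝ E)) x :=
  h.comp x (hasFDerivAt_prodMk_right t x)

theorem hasDerivAt_fderiv_apply_of_contDiffAt
    (hF : ContDiffAt ℝ 2 (fun p : ℝ × E => F p.1 p.2) (t, x)) (w : E) :
    HasDerivAt (fun s => fderiv ℝ (F s) x w)
      (fderiv ℝ (fun y => deriv (fun s => F s y) t) x w) t := by
  set G := fun p : ℝ × E => F p.1 p.2
  have hG : ∀ᶠ p in 𝓝 (t, x), HasFDerivAt G (fderiv ℝ G p) p :=
    (hF.eventually (by simp)).mono fun p hp =>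
      (hp.differentiableAt (by norm_num)).hasFDerivAt
  have hD : HasFDerivAt (fderiv ℝ G) (fderiv ℝ (fderiv ℝ G) (t, x)) (t, x) :=
    ((hF.fderiv_right (m := 1) (by norm_num)).differentiableAt (by norm_num)).hasFDerivAt
  have hspace : (fun s => fderiv ℝ (F s) x w) =ᶠ[𝓝 t] fun s => fderiv ℝ G (s, x) (0, w) := by
    have := (continuousAt_id.prodMk continuousAt_const).eventually hG
    filter_upwards [this] with s hs
    rw [(hasFDerivAt_apply_right_of_hasFDerivAt (t := s) (x := x) hs).fderiv]
    rfl
  have htime : (fun y => deriv (fun s => F s y) t) =ᶠ[𝓝 x] fun y => fderiv ℝ G (t, y) (1, 0) := by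
    have := (continuousAt_const.prodMk continuousAt_id).eventually hG
    filter_upwards [this] with y hy
    exact (hasDerivAt_apply_left_of_hasFDerivAt hy).deriv
  have hsymm := hF.isSymmSndFDerivAt (by simp [minSmoothness_of_isRCLikeNormedField])
  have hD_time : HasDerivAt (fun s => fderiv ℝ G (s, x) (0, w))
      (fderiv ℝ (fderiv ℝ G) (t, x) (1, 0) (0, w)) t := by
    simpa [Function.comp_def] using
      (((ContinuousLinearMap.apply ℝ ℝ ((0 : ℝ), w)).hasFDerivAt.comp (t, x) hD).comp t
        (hasFDerivAt_prodMk_left t x)).hasDerivAt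
  have hD_space : fderiv ℝ (fun y => fderiv ℝ G (t, y) (1, 0)) x w
      = fderiv ℝ (fderiv ℝ G) (t, x) (0, w) (1, 0) := by
    have h : HasFDerivAt (fun y => fderiv ℝ G (t, y) (1, 0))
        (((ContinuousLinearMap.apply ℝ ℝ ((1 : ℝ), (0 : E))).comp
          (fderiv ℝ (fderiv ℝ G) (t, x))).comp (ContinuousLinearMap.inr ℝ ℝ E)) x :=
      ((ContinuousLinearMap.apply ℝ ℝ ((1 : ℝ), (0 : E))).hasFDerivAt.comp (t, x) hD).comp x
        (hasFDerivAt_prodMk_right t x)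
    rw [h.fderiv]
    rfl
  rw [htime.fderiv_eq, hD_space, ← hsymm]
  exact hD_time.congr_of_eventuallyEq hspace

theorem deriv_rpow_mul_fderiv_apply {ρ Φ : ℝ → E → ℝ}
    (hρ : DifferentiableAt ℝ (fun p : ℝ × E => ρ p.1 p.2) (t, x)) (hρx : ρ t x ≠ 0)
    (hΦ : ContDiffAt ℝ 2 (fun p : ℝ × E => Φ p.1 p.2) (t, x)) (e : ℝ) (w : E) :
    deriv (fun s => ρ s x ^ e * fderiv ℝ (Φ s) x w) t
      = e * ρ t x ^ (e - 1) * deriv (fun s => ρ s x) t * fderiv ℝ (Φ t) x w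
        + ρ t x ^ e * fderiv ℝ (fun y => deriv (fun s => Φ s y) t) x w := by
  have hρt := hasDerivAt_apply_left_of_hasFDerivAt hρ.hasFDerivAt
  rw [((hρt.rpow_const (Or.inl hρx)).fun_mul (hasDerivAt_fderiv_apply_of_contDiffAt hΦ w)).deriv,
    hρt.deriv]
  ring

theorem ContDiffOn.contDiff_apply_left {I : Set ℝ} {k : WithTop ℕ∞}
    (hF : ContDiffOn ℝ k (fun p : ℝ × E => F p.1 p.2) (I ×ˢ univ)) (ht : t ∈ I) :
    ContDiff ℝ k (F t) :=
  hF.comp_contDiff (contDiff_const.prodMk contDiff_id) fun _ => ⟨ht, trivial⟩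

end PartialDerivatives

section SpatialCalculus

variable {n : ℕ} {f g r : EuclideanSpace ℝ (Fin n) → ℝ} {x : EuclideanSpace ℝ (Fin n)}

theorem gradient_apply_eq_pder (f : EuclideanSpace ℝ (Fin n) → ℝ) (x : EuclideanSpace ℝ (Fin n))
    (i : Fin n) : gradient f x i = pder n i f x := by
  have h : inner ℝ (gradient f x) (EuclideanSpace.single i (1:ℝ))
      = fderiv ℝ f x (EuclideanSpace.single i 1) := InnerProductSpace.toDual_symm_apply
  rw [EuclideanSpace.inner_single_right] at h
  simpa [pder] using h

theorem norm_sq_gradient_eq_sum (f : EuclideanSpace ℝ (Fin n) → ℝ) (x : EuclideanSpace ℝ (Fin n)) :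
    ‖gradient f x‖ ^ 2 = ∑ k, pder n k f x ^ 2 := by
  simp [EuclideanSpace.norm_sq_eq, gradient_apply_eq_pder]

theorem HasFDerivAt.pder_eq {L : EuclideanSpace ℝ (Fin n) →L[ℝ] ℝ} (h : HasFDerivAt f L x)
    (j : Fin n) : pder n j f x = L (EuclideanSpace.single j 1) := by
  rw [pder, h.fderiv]

theorem ContDiff.pder {k : WithTop ℕ∞} (hf : ContDiff ℝ (k + 1) f) (j : Fin n) :
    ContDiff ℝ k (fun y => pder n j f y) :=
  (hf.fderiv_right le_rfl).clm_apply contDiff_const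

theorem hessij_eq_fderiv_fderiv (hf : ContDiff ℝ 2 f) (i j : Fin n) :
    hessij n f x i j
      = fderiv ℝ (fderiv ℝ f) x (EuclideanSpace.single i 1) (EuclideanSpace.single j 1) := by
  have hD := ((hf.fderiv_right (m := 1) (by norm_num)).differentiable (by norm_num) x).hasFDerivAt
  exact ((ContinuousLinearMap.apply ℝ ℝ (EuclideanSpace.single j (1 : ℝ))).hasFDerivAt.comp x
    hD).pder_eq i

theorem hessij_comm (hf : ContDiff ℝ 2 f) (i j : Fin n) : hessij n f x i j = hessij n f x j i := by
  rw [hessij_eq_fderiv_fderiv hf, hessij_eq_fderiv_fderiv hf]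
  exact hf.contDiffAt.isSymmSndFDerivAt (by simp [minSmoothness_of_isRCLikeNormedField]) _ _

theorem pder_rpow_mul (hr : DifferentiableAt ℝ r x) (hrx : r x ≠ 0) (hg : DifferentiableAt ℝ g x)
    (e : ℝ) (j : Fin n) :
    pder n j (fun y => r y ^ e * g y) x
      = e * r x ^ (e - 1) * pder n j r x * g x + r x ^ e * pder n j g x := by
  rw [((hr.hasFDerivAt.rpow_const (Or.inl hrx)).fun_mul hg.hasFDerivAt).pder_eq]
  simp only [add_apply, smul_apply, smul_eq_mul, pder]
  ring

theorem pder_const_mul (c : ℝ) (j : Fin n) :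
    pder n j (fun y => c * g y) x = c * pder n j g x := by
  change fderiv ℝ (c • g) x _ = _
  rw [fderiv_const_smul_field]
  rfl

theorem pder_log (hr : DifferentiableAt ℝ r x) (hrx : r x ≠ 0) (j : Fin n) :
    pder n j (fun y => Real.log (r y)) x = pder n j r x / r x := by
  rw [(hr.hasFDerivAt.log hrx).pder_eq]
  simp [pder, div_eq_inv_mul]

theorem pder_norm_sq_gradient (hf : ContDiff ℝ 2 f) (i : Fin n) :
    pder n i (fun y => ‖gradient f y‖ ^ 2) x = 2 * ∑ k, pder n k f x * hessij n f x i k := by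
  have hpder (k : Fin n) : DifferentiableAt ℝ (fun y => pder n k f y) x :=
    (hf.pder (k := 1) k).differentiable (by norm_num) x
  simp_rw [norm_sq_gradient_eq_sum]
  rw [(HasFDerivAt.fun_sum fun k _ => (hpder k).hasFDerivAt.pow 2).pder_eq, Finset.mul_sum]
  simp [hessij, pder, mul_assoc]

theorem rpow_smul_gradient_apply (e : ℝ) (y : EuclideanSpace ℝ (Fin n)) (i : Fin n) :
    (r y ^ e • gradient f y) i = r y ^ e * pder n i f y := by
  simp [gradient_apply_eq_pder]

theorem norm_rpow_smul_sq {c : ℝ} (hc : 0 < c) (e : ℝ) (u : EuclideanSpace ℝ (Fin n)) :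
    ‖c ^ e • u‖ ^ 2 = c ^ (e * 2) * ‖u‖ ^ 2 := by
  rw [norm_smul, mul_pow, Real.norm_of_nonneg (by positivity), ← Real.rpow_natCast,
    ← Real.rpow_mul hc.le]
  norm_num

section

variable (hf : ContDiff ℝ 2 f) (hr : DifferentiableAt ℝ r x) (hrx : r x ≠ 0)
include hf hr hrx

theorem pder_rpow_smul_gradient_apply (e : ℝ) (i j : Fin n) :
    pder n j (fun y => (r y ^ e • gradient f y) i) x
      = e * r x ^ (e - 1) * pder n j r x * pder n i f x + r x ^ e * hessij n f x j i := by
  simp_rw [rpow_smul_gradient_apply]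
  exact pder_rpow_mul hr hrx ((hf.pder (k := 1) i).differentiable (by norm_num) x) e j

theorem divg_rpow_smul_gradient (e : ℝ) :
    divg n (fun y => r y ^ e • gradient f y) x
      = e * r x ^ (e - 1) * (∑ j, pder n j r x * pder n j f x) + r x ^ e * lapl n f x := by
  simp only [divg, lapl, pder_rpow_smul_gradient_apply hf hr hrx, Finset.mul_sum,
    ← Finset.sum_add_distrib, hessij]
  exact Finset.sum_congr rfl fun j _ => by ring

theorem sum_mul_pder_rpow_smul_gradient_apply (e : ℝ) (i : Fin n) :
    ∑ j, (r x ^ e • gradient f x) j * pder n j (fun y => (r y ^ e • gradient f y) i) x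
      = r x ^ e * (e * r x ^ (e - 1) * (∑ j, pder n j r x * pder n j f x) * pder n i f x
        + r x ^ e * ∑ j, pder n j f x * hessij n f x i j) := by
  simp only [pder_rpow_smul_gradient_apply hf hr hrx]
  simp only [rpow_smul_gradient_apply, Finset.mul_sum, Finset.sum_mul, ← Finset.sum_add_distrib]
  exact Finset.sum_congr rfl fun j _ => by rw [hessij_comm hf j i]; ring

theorem pder_rpow_mul_norm_sq_gradient (e : ℝ) (i : Fin n) :
    pder n i (fun y => r y ^ e * ‖gradient f y‖ ^ 2) x
      = e * r x ^ (e - 1) * pder n i r x * ‖gradient f x‖ ^ 2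
        + r x ^ e * (2 * ∑ k, pder n k f x * hessij n f x i k) := by
  have hS : DifferentiableAt ℝ (fun y => ‖gradient f y‖ ^ 2) x := by
    simp_rw [norm_sq_gradient_eq_sum]
    exact DifferentiableAt.fun_sum fun k _ =>
      ((hf.pder (k := 1) k).differentiable (by norm_num) x).pow 2
  rw [pder_rpow_mul hr hrx hS, pder_norm_sq_gradient hf]

end

theorem acceleration_identity (hf : ContDiff ℝ 2 f) (hr : Differentiable ℝ r)
    (hpos : ∀ y, 0 < r y) (γ : ℝ) (i : Fin n) :
    (γ - 1) * r x ^ (γ - 1 - 1) * -divg n (fun y => r y ^ γ • gradient f y) x * pder n i f x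
      + r x ^ (γ - 1) * pder n i (fun y => -(γ / 2) * (r y ^ (γ - 1) * ‖gradient f y‖ ^ 2)) x
      + ∑ j, (r x ^ (γ - 1) • gradient f x) j
          * pder n j (fun y => (r y ^ (γ - 1) • gradient f y) i) x
    = -((γ - 1) / 2 * pder n i (fun y => ‖r y ^ (γ - 1) • gradient f y‖ ^ 2) x)
      - (γ - 1) * divg n (fun y => r y ^ (γ - 1) • gradient f y) x
          * (r x ^ (γ - 1) • gradient f x) i
      + (γ - 2) * (γ - 1) / 2 * ‖r x ^ (γ - 1) • gradient f x‖ ^ 2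
          * pder n i (fun y => Real.log (r y)) x := by
  have hrx := (hpos x).ne'
  simp_rw [norm_rpow_smul_sq (hpos _)]
  rw [pder_const_mul, pder_rpow_mul_norm_sq_gradient hf (hr x) hrx,
    pder_rpow_mul_norm_sq_gradient hf (hr x) hrx, divg_rpow_smul_gradient hf (hr x) hrx,
    divg_rpow_smul_gradient hf (hr x) hrx, sum_mul_pder_rpow_smul_gradient_apply hf (hr x) hrx,
    rpow_smul_gradient_apply, pder_log (hr x) hrx]
  set P := r x ^ (γ - 2)
  have h1 : r x ^ (γ - 1 - 1) = P := by rw [sub_sub, one_add_one_eq_two]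
  have h2 : r x ^ (γ - 1) = P * r x := by
    rw [← Real.rpow_add_one hrx]; ring_nf
  have h3 : r x ^ γ = P * r x * r x := by
    rw [← h2, ← Real.rpow_add_one hrx]; ring_nf
  have h4 : r x ^ ((γ - 1) * 2) = P * P * r x * r x := by
    rw [show (γ - 1) * 2 = γ - 2 + (γ - 2) + 1 + 1 by ring, Real.rpow_add_one hrx,
      Real.rpow_add_one hrx, Real.rpow_add (hpos x)]
  have h5 : r x ^ ((γ - 1) * 2 - 1) = P * P * r x := by
    rw [show (γ - 1) * 2 - 1 = γ - 2 + (γ - 2) + 1 by ring, Real.rpow_add_one hrx,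
      Real.rpow_add (hpos x)]
  rw [h1, h2, h3, h4, h5]
  field_simp
  ring

end SpatialCalculus

theorem stmt8_general (n : ℕ) (γ : ℝ)
    (I : Set ℝ) (hIopen : IsOpen I)
    (ρ Φ : ℝ → EuclideanSpace ℝ (Fin n) → ℝ)
    (hρ : ContDiffOn ℝ (⊤ : ℕ∞) (fun p : ℝ × EuclideanSpace ℝ (Fin n) => ρ p.1 p.2)
      (I ×ˢ univ))
    (hΦ : ContDiffOn ℝ (⊤ : ℕ∞) (fun p : ℝ × EuclideanSpace ℝ (Fin n) => Φ p.1 p.2)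
      (I ×ˢ univ))
    (hρpos : ∀ t ∈ I, ∀ x, 0 < ρ t x)
    (hcont : ∀ t ∈ I, ∀ x, deriv (fun s => ρ s x) t
      + divg n (fun y => (ρ t y)^γ • gradient (Φ t) y) x = 0)
    (hHJ : ∀ t ∈ I, ∀ x, deriv (fun s => Φ s x) t
      + (γ/2) * (ρ t x)^(γ-1) * ‖gradient (Φ t) x‖^2 = 0)
    (v : ℝ → EuclideanSpace ℝ (Fin n) → EuclideanSpace ℝ (Fin n))
    (hv : ∀ t x, v t x = (ρ t x)^(γ-1) • gradient (Φ t) x) :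
    ∀ t ∈ I, ∀ x,
      toE n (fun i => deriv (fun s => v s x i) t)
        + toE n (fun i => ∑ j, v t x j * pder n j (fun y => v t y i) x)
      = -(((γ-1)/2) • gradient (fun y => ‖v t y‖^2) x)
        - ((γ-1) * divg n (v t) x) • v t x
        + (((γ-2)*(γ-1)/2) * ‖v t x‖^2) • gradient (fun y => Real.log (ρ t y)) x := by
  intro t ht x
  have hnhds : I ×ˢ univ ∈ 𝓝 (t, x) := (hIopen.prod isOpen_univ).mem_nhds ⟨ht, trivial⟩
  have h2 : (2 : WithTop ℕ∞) ≤ (⊤ : ℕ∞) := WithTop.coe_le_coe.mpr le_top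
  have hf : ContDiff ℝ 2 (Φ t) := (hΦ.contDiff_apply_left ht).of_le h2
  have hr : Differentiable ℝ (ρ t) :=
    (hρ.contDiff_apply_left ht).differentiable (by simp)
  have hρ_t : deriv (fun s => ρ s x) t = -divg n (fun y => ρ t y ^ γ • gradient (Φ t) y) x :=
    eq_neg_of_add_eq_zero_left (hcont t ht x)
  have hΦ_t : (fun y => deriv (fun s => Φ s y) t)
      = fun y => -(γ / 2) * (ρ t y ^ (γ - 1) * ‖gradient (Φ t) y‖ ^ 2) := by
    funext y
    rw [eq_neg_of_add_eq_zero_left (hHJ t ht y)]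
    ring
  have hv_t (i : Fin n) : deriv (fun s => v s x i) t
      = (γ - 1) * ρ t x ^ (γ - 1 - 1) * deriv (fun s => ρ s x) t * pder n i (Φ t) x
        + ρ t x ^ (γ - 1) * pder n i (fun y => deriv (fun s => Φ s y) t) x := by
    simp_rw [hv, rpow_smul_gradient_apply]
    exact deriv_rpow_mul_fderiv_apply ((hρ.contDiffAt hnhds).differentiableAt (by simp))
      (hρpos t ht x).ne' ((hΦ.contDiffAt hnhds).of_le h2) _ _
  ext i
  simp only [toE, PiLp.add_apply, PiLp.sub_apply, PiLp.neg_apply, PiLp.smul_apply,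
    WithLp.equiv_symm_apply, smul_eq_mul]
  rw [hv_t, hρ_t, hΦ_t, show v t = _ from funext (hv t), gradient_apply_eq_pder,
    gradient_apply_eq_pder]
  exact acceleration_identity hf hr (hρpos t ht) γ i

/-- Eulerian form of the Lagrangian geodesic equation for the
γ-Wasserstein co-geodesic system.  If `∂ₜρ + ∇·(ρ^γ∇Φ) = 0` and
`∂ₜΦ + (γ/2)ρ^{γ−1}‖∇Φ‖² = 0` on `I × ℝⁿ`, and `v = ρ^{γ−1}∇Φ`, then
`∂ₜv + (Dv)v = −((γ−1)/2)∇‖v‖² − (γ−1)(∇·v)v + ((γ−2)(γ−1)/2)‖v‖²∇log ρ`. -/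
theorem stmt8 (n : ℕ) (hn : 1 ≤ n) (γ : ℝ)
    (I : Set ℝ) (hIopen : IsOpen I) (hIconn : I.OrdConnected)
    (ρ Φ : ℝ → EuclideanSpace ℝ (Fin n) → ℝ)
    (hρ : ContDiffOn ℝ (⊤ : ℕ∞) (fun p : ℝ × EuclideanSpace ℝ (Fin n) => ρ p.1 p.2)
      (I ×ˢ univ))
    (hΦ : ContDiffOn ℝ (⊤ : ℕ∞) (fun p : ℝ × EuclideanSpace ℝ (Fin n) => Φ p.1 p.2)
      (I ×ˢ univ))
    (hρpos : ∀ t ∈ I, ∀ x, 0 < ρ t x)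
    (hcont : ∀ t ∈ I, ∀ x, deriv (fun s => ρ s x) t
      + divg n (fun y => (ρ t y)^γ • gradient (Φ t) y) x = 0)
    (hHJ : ∀ t ∈ I, ∀ x, deriv (fun s => Φ s x) t
      + (γ/2) * (ρ t x)^(γ-1) * ‖gradient (Φ t) x‖^2 = 0)
    (v : ℝ → EuclideanSpace ℝ (Fin n) → EuclideanSpace ℝ (Fin n))
    (hv : ∀ t x, v t x = (ρ t x)^(γ-1) • gradient (Φ t) x) :
    ∀ t ∈ I, ∀ x,
      toE n (fun i => deriv (fun s => v s x i) t)
        + toE n (fun i => ∑ j, v t x j * pder n j (fun y => v t y i) x)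
      = -(((γ-1)/2) • gradient (fun y => ‖v t y‖^2) x)
        - ((γ-1) * divg n (v t) x) • v t x
        + (((γ-2)*(γ-1)/2) * ‖v t x‖^2) • gradient (fun y => Real.log (ρ t y)) x :=
  stmt8_general n γ I hIopen ρ Φ hρ hΦ hρpos hcont hHJ v hv
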